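/- Let G be a finite group acting unitarily on ℂ^d. For any density matrix ρ, the relative entropy of asymmetry Γ(ρ) := S(𝒢(ρ)) - S(ρ) satisfies the variational characterization Γ(ρ) = inf over G-invariant density matrices ω of S(ρ ‖ ω). -/

import Mathlib

open Matrix
open scoped Kronecker ComplexOrder
open scoped Classical

variable {n : Type*} [Fintype n] [DecidableEq n]

/-- Density matrix predicate -/
def IsDensityMatrix (ρ : Matrix n n ℂ) : Prop := ρ.PosSemidef ∧ ρ.trace = 1

/-- von Neumann entropy, base 2 -/
noncomputable def vnEntropy (A : Matrix n n ℂ) : ℝ :=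
  if h : A.IsHermitian then -∑ i, h.eigenvalues i * Real.logb 2 (h.eigenvalues i) else 0

/-- twirl over a finite group -/
noncomputable def twirl {G : Type*} [Group G] [Fintype G]
    (U : G →* Matrix.unitaryGroup n ℂ) (ρ : Matrix n n ℂ) : Matrix n n ℂ :=
  (Fintype.card G : ℂ)⁻¹ • ∑ g : G, (U g : Matrix n n ℂ) * ρ * star (U g : Matrix n n ℂ)

/-- relative entropy of asymmetry -/
noncomputable def relEntAsym {G : Type*} [Group G] [Fintype G]
    (U : G →* Matrix.unitaryGroup n ℂ) (ρ : Matrix n n ℂ) : ℝ :=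
  vnEntropy (twirl U ρ) - vnEntropy ρ

/-- `Matrix.PosSemidef.sqrt` as defined in the older Mathlib (removed since) -/
noncomputable def posSemidefSqrt {A : Matrix n n ℂ} (hA : A.PosSemidef) : Matrix n n ℂ :=
  (hA.1.eigenvectorUnitary : Matrix n n ℂ) *
    diagonal (((↑) : ℝ → ℂ) ∘ Real.sqrt ∘ hA.1.eigenvalues) *
    (star hA.1.eigenvectorUnitary : Matrix n n ℂ)

/-- square root of a PSD matrix (0 otherwise) -/
noncomputable def sqrtPSD (A : Matrix n n ℂ) : Matrix n n ℂ :=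
  if h : A.PosSemidef then posSemidefSqrt h else 0

/-- trace norm -/
noncomputable def traceNorm (A : Matrix n n ℂ) : ℝ :=
  ((posSemidefSqrt (Matrix.posSemidef_conjTranspose_mul_self A)).trace).re

/-- fidelity F(ρ,σ) = ‖√ρ√σ‖₁ -/
noncomputable def fidelity (ρ σ : Matrix n n ℂ) : ℝ := traceNorm (sqrtPSD ρ * sqrtPSD σ)

/-- binary entropy, base 2 -/
noncomputable def binEntropy2 (x : ℝ) : ℝ := -x * Real.logb 2 x - (1-x) * Real.logb 2 (1-x)

/-- matrix logarithm (base 2) of a Hermitian matrix -/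
noncomputable def matLogb (A : Matrix n n ℂ) : Matrix n n ℂ :=
  if h : A.IsHermitian then
    (h.eigenvectorUnitary : Matrix n n ℂ) *
      Matrix.diagonal (fun i => (Real.logb 2 (h.eigenvalues i) : ℂ)) *
      star (h.eigenvectorUnitary : Matrix n n ℂ)
  else 0

/-- quantum relative entropy, +∞ if support condition fails -/
noncomputable def relEntropy (ρ σ : Matrix n n ℂ) : EReal :=
  if ∀ v : n → ℂ, σ *ᵥ v = 0 → ρ *ᵥ v = 0 then
    (((ρ * (matLogb ρ - matLogb σ)).trace).re : EReal)
  else ⊤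

/-- complete positivity -/
def IsCompletelyPositive {m : Type*} [Fintype m] [DecidableEq m]
    (Φ : Matrix n n ℂ →ₗ[ℂ] Matrix m m ℂ) : Prop :=
  ∀ (k : ℕ) (M : Matrix (Fin k × n) (Fin k × n) ℂ), M.PosSemidef →
    (Matrix.of fun p q : Fin k × m =>
      (Φ (Matrix.of fun a b => M (p.1, a) (q.1, b))) p.2 q.2).PosSemidef

/-- CPTP map -/
def IsQuantumChannel {m : Type*} [Fintype m] [DecidableEq m]
    (Φ : Matrix n n ℂ →ₗ[ℂ] Matrix m m ℂ) : Prop :=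
  IsCompletelyPositive Φ ∧ ∀ A, (Φ A).trace = A.trace

/-- G-covariance of a map between systems with representations U, V -/
def IsCovariant {m : Type*} [Fintype m] [DecidableEq m] {G : Type*} [Group G]
    (U : G →* Matrix.unitaryGroup n ℂ) (V : G →* Matrix.unitaryGroup m ℂ)
    (Φ : Matrix n n ℂ →ₗ[ℂ] Matrix m m ℂ) : Prop :=
  ∀ g A, Φ ((U g : Matrix n n ℂ) * A * star (U g : Matrix n n ℂ))
    = (V g : Matrix m m ℂ) * Φ A * star (V g : Matrix m m ℂ)


/-!
For a `G`-invariant `ω`, every `U_g` commutes with `ω` and hence with `log ω`, so averaging over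
`G` gives `Tr ρ log ω = Tr 𝒢(ρ) log ω`. Consequently `S(ρ‖ω) = Γ(ρ) + S(𝒢(ρ)‖ω)`, the support
conditions on both sides being equivalent because `ker ω` is `G`-invariant and
`ker 𝒢(ρ) ⊆ ker ρ`. Klein's inequality `S(𝒢(ρ)‖ω) ≥ 0` gives `Γ(ρ)` as a lower bound, attained
at `ω = 𝒢(ρ)`, which is itself invariant. Klein's inequality reduces, in eigenbases `(vᵢ)` of
`σ` and `(wⱼ)` of `ω`, to Gibbs' inequality for the eigenvalues of `σ` and their image under the
doubly stochastic matrix `|⟨wⱼ, vᵢ⟩|²`.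
-/

theorem Real.mul_log_le_mul_log_sub_add {a b : ℝ} (ha : 0 ≤ a) (hb : 0 ≤ b) (hab : b = 0 → a = 0) :
    a * Real.log b ≤ a * Real.log a - a + b := by
  rcases ha.eq_or_lt with rfl | ha
  · simpa using hb
  rcases hb.eq_or_lt with rfl | hb
  · exact absurd (hab rfl) ha.ne'
  have h := Real.log_le_sub_one_of_pos (div_pos hb ha)
  rw [Real.log_div hb.ne' ha.ne', le_sub_iff_add_le] at h
  have := mul_le_mul_of_nonneg_left h ha.le
  rw [mul_add, mul_sub, mul_div_cancel₀ _ ha.ne'] at this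
  linarith

section Gibbs

variable {ι : Type*} [Fintype ι] [DecidableEq ι] {Q : Matrix ι ι ℝ} {p q : ι → ℝ}

theorem sum_mulVec_mul_log_le (hQ : Q ∈ doublyStochastic ℝ ι) (hp : ∀ i, 0 ≤ p i)
    (hq : ∀ i, 0 ≤ q i) (hpq : ∑ i, p i = ∑ i, q i) (hsupp : ∀ j, q j = 0 → (Q *ᵥ p) j = 0) :
    ∑ j, (Q *ᵥ p) j * Real.log (q j) ≤ ∑ i, p i * Real.log (p i) := by
  obtain ⟨hQ0, hrow, hcol⟩ := mem_doublyStochastic_iff_sum.mp hQ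
  have hterm (i j : ι) :
      Q j i * (p i * Real.log (q j)) ≤ Q j i * (p i * Real.log (p i) - p i + q j) := by
    rcases (hQ0 j i).eq_or_lt with h0 | hpos
    · simp [← h0]
    refine mul_le_mul_of_nonneg_left (Real.mul_log_le_mul_log_sub_add (hp i) (hq j) fun hqj => ?_)
      hpos.le
    have := (Finset.sum_eq_zero_iff_of_nonneg fun i _ => mul_nonneg (hQ0 j i) (hp i)).mp
      (hsupp j hqj) i (Finset.mem_univ i)
    exact (mul_eq_zero.mp this).resolve_left hpos.ne'
  calc ∑ j, (Q *ᵥ p) j * Real.log (q j)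
      = ∑ j, ∑ i, Q j i * (p i * Real.log (q j)) := by
        simp only [mulVec, dotProduct, Finset.sum_mul, mul_assoc]
    _ ≤ ∑ j, ∑ i, Q j i * (p i * Real.log (p i) - p i + q j) :=
        Finset.sum_le_sum fun j _ => Finset.sum_le_sum fun i _ => hterm i j
    _ = ∑ i, p i * Real.log (p i) - ∑ i, p i + ∑ j, q j := by
        simp only [mul_add, mul_sub, Finset.sum_add_distrib, Finset.sum_sub_distrib,
          ← Finset.sum_mul, hrow, one_mul]
        rw [Finset.sum_comm (f := fun j i => Q j i * (p i * Real.log (p i))),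
          Finset.sum_comm (f := fun j i => Q j i * p i)]
        simp only [← Finset.sum_mul, hcol, one_mul]
    _ = ∑ i, p i * Real.log (p i) := by rw [hpq]; ring

theorem sum_mulVec_mul_logb_le {b : ℝ} (hb : 1 < b) (hQ : Q ∈ doublyStochastic ℝ ι)
    (hp : ∀ i, 0 ≤ p i) (hq : ∀ i, 0 ≤ q i) (hpq : ∑ i, p i = ∑ i, q i)
    (hsupp : ∀ j, q j = 0 → (Q *ᵥ p) j = 0) :
    ∑ j, (Q *ᵥ p) j * Real.logb b (q j) ≤ ∑ i, p i * Real.logb b (p i) := by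
  simp only [Real.logb, mul_div_assoc', ← Finset.sum_div]
  exact div_le_div_of_nonneg_right (sum_mulVec_mul_log_le hQ hp hq hpq hsupp)
    (Real.log_pos hb).le

end Gibbs

theorem Matrix.map_normSq_mem_doublyStochastic {M : Matrix n n ℂ} (hM : M ∈ unitaryGroup n ℂ) :
    M.map Complex.normSq ∈ doublyStochastic ℝ n := by
  have hdiag {A : Matrix n n ℂ} (hA : A * star A = 1) (i : n) :
      ∑ j, Complex.normSq (A i j) = 1 := by
    have h := congrFun (congrFun hA i) i
    simp only [mul_apply, star_apply, RCLike.star_def, Complex.mul_conj, one_apply_eq] at h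
    exact_mod_cast h
  refine mem_doublyStochastic_iff_sum.mpr
    ⟨fun _ _ => Complex.normSq_nonneg _, fun i => ?_, fun j => ?_⟩
  · exact hdiag (mem_unitaryGroup_iff.mp hM) i
  · simpa [Complex.normSq_conj] using
      hdiag (mem_unitaryGroup_iff.mp (Unitary.star_mem hM)) j

theorem Matrix.mul_diagonal_mul_star_apply_self (M : Matrix n n ℂ) (d : n → ℝ) (j : n) :
    (M * diagonal (RCLike.ofReal ∘ d : n → ℂ) * star M) j j =
      ((M.map Complex.normSq *ᵥ d) j : ℂ) := by
  simp only [mul_apply, diagonal_apply, star_apply, RCLike.star_def, mulVec, dotProduct,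
    map_apply, Complex.ofReal_sum, Complex.ofReal_mul, Complex.normSq_eq_conj_mul_self, mul_ite,
    mul_zero, Finset.sum_ite_eq', Finset.mem_univ, if_true, Function.comp_apply,
    RCLike.ofReal_eq_complex_ofReal]
  exact Finset.sum_congr rfl fun i _ => by ring

theorem matLogb_eq_cfc (A : Matrix n n ℂ) : matLogb A = cfc (Real.logb 2) A := by
  by_cases hA : A.IsHermitian
  · rw [hA.cfc_eq, matLogb, dif_pos hA, IsHermitian.cfc, Unitary.conjStarAlgAut_apply]
    rfl
  · rw [matLogb, dif_neg hA]
    exact (cfc_apply_of_not_predicate A hA).symm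

theorem Commute.matLogb {W A : Matrix n n ℂ} (h : Commute W A) : Commute W (matLogb A) :=
  matLogb_eq_cfc A ▸ (h.symm.cfc_real _).symm

theorem trace_mul_matLogb (A : Matrix n n ℂ) {B : Matrix n n ℂ} (hB : B.IsHermitian) :
    (A * matLogb B).trace = ∑ j, (Real.logb 2 (hB.eigenvalues j) : ℂ) *
      (star (hB.eigenvectorUnitary : Matrix n n ℂ) * A * hB.eigenvectorUnitary) j j := by
  rw [matLogb, dif_pos hB, ← mul_assoc, ← mul_assoc, trace_mul_cycle, ← mul_assoc]
  simp only [trace, diag_apply, mul_diagonal, mul_comm]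

theorem trace_mul_matLogb_self {A : Matrix n n ℂ} (hA : A.IsHermitian) :
    (A * matLogb A).trace = ∑ i, ((hA.eigenvalues i * Real.logb 2 (hA.eigenvalues i) : ℝ) : ℂ) := by
  have hdiag := hA.conjStarAlgAut_star_eigenvectorUnitary
  rw [Unitary.conjStarAlgAut_apply, Unitary.coe_star, star_star] at hdiag
  rw [trace_mul_matLogb A hA, hdiag]
  simp [mul_comm]

theorem vnEntropy_eq_neg_re_trace {A : Matrix n n ℂ} (hA : A.IsHermitian) :
    vnEntropy A = -((A * matLogb A).trace).re := by
  simp [vnEntropy, hA, trace_mul_matLogb_self hA, Complex.re_sum]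

theorem re_trace_mul_matLogb_le {σ ω : Matrix n n ℂ} (hσ : σ.PosSemidef) (hω : ω.PosSemidef)
    (htr : σ.trace = ω.trace) (hsupp : ∀ v, ω *ᵥ v = 0 → σ *ᵥ v = 0) :
    ((σ * matLogb ω).trace).re ≤ ((σ * matLogb σ).trace).re := by
  have hσH : σ.IsHermitian := hσ.1
  have hωH : ω.IsHermitian := hω.1
  rw [trace_mul_matLogb σ hωH, trace_mul_matLogb_self hσH, Complex.re_sum, Complex.re_sum]
  set V : Matrix n n ℂ := (hσH.eigenvectorUnitary : Matrix n n ℂ)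
  set W : Matrix n n ℂ := (hωH.eigenvectorUnitary : Matrix n n ℂ)
  set M : Matrix n n ℂ := star W * V
  have hM : M ∈ unitaryGroup n ℂ :=
    mul_mem (Unitary.star_mem (SetLike.coe_mem _)) (SetLike.coe_mem _)
  have hconj :
      star W * σ * W = M * diagonal (RCLike.ofReal ∘ hσH.eigenvalues : n → ℂ) * star M := by
    conv_lhs => rw [hσH.spectral_theorem, Unitary.conjStarAlgAut_apply]
    simp only [M, V, StarMul.star_mul, star_star, mul_assoc]
  have hdiag (j : n) : (star W * σ * W) j j = (M.map Complex.normSq *ᵥ hσH.eigenvalues) j := by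
    rw [hconj, mul_diagonal_mul_star_apply_self]
  have hsum : ∑ i, hσH.eigenvalues i = ∑ j, hωH.eigenvalues j := by
    have := congrArg Complex.re htr
    rwa [hσH.trace_eq_sum_eigenvalues, hωH.trace_eq_sum_eigenvalues, Complex.re_sum,
      Complex.re_sum] at this
  have hker (j : n) (hj : hωH.eigenvalues j = 0) :
      (M.map Complex.normSq *ᵥ hσH.eigenvalues) j = 0 := by
    have hvec : σ *ᵥ W.col j = 0 := hsupp _ <| by
      rw [IsHermitian.eigenvectorUnitary_col_eq, hωH.mulVec_eigenvectorBasis, hj, zero_smul]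
    have : (star W * σ * W) j j = 0 := by
      rw [show (star W * σ * W) j j = ((star W * σ * W) *ᵥ Pi.single j 1) j by simp,
        ← mulVec_mulVec, ← mulVec_mulVec, mulVec_single_one, hvec, mulVec_zero, Pi.zero_apply]
    exact_mod_cast (hdiag j).symm.trans this
  have hklein := sum_mulVec_mul_logb_le one_lt_two (map_normSq_mem_doublyStochastic hM)
    hσ.eigenvalues_nonneg hω.eigenvalues_nonneg hsum hker
  simpa only [hdiag, Complex.re_ofReal_mul, Complex.ofReal_re, mul_comm (Real.logb _ _)]
    using hklein

theorem Matrix.mulVec_eq_zero_of_sum_posSemidef {m 𝕜 ι : Type*} [Fintype m] [RCLike 𝕜]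
    {s : Finset ι} {A : ι → Matrix m m 𝕜} (hA : ∀ i ∈ s, (A i).PosSemidef) {v : m → 𝕜}
    (hv : (∑ i ∈ s, A i) *ᵥ v = 0) {j : ι} (hj : j ∈ s) : A j *ᵥ v = 0 := by
  have hsum : ∑ i ∈ s, star v ⬝ᵥ (A i *ᵥ v) = 0 := by
    rw [← dotProduct_sum, ← sum_mulVec, hv, dotProduct_zero]
  refine ((hA j hj).dotProduct_mulVec_zero_iff v).mp ?_
  exact (Finset.sum_eq_zero_iff_of_nonneg fun i hi => (hA i hi).dotProduct_mulVec_nonneg v).mp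
    hsum j hj

theorem Unitary.mul_mul_star_eq_iff_commute {R : Type*} [Monoid R] [StarMul R] {W A : R}
    (hW : W ∈ unitary R) : W * A * star W = A ↔ Commute W A := by
  constructor
  · intro h
    calc W * A = W * A * (star W * W) := by rw [Unitary.star_mul_self_of_mem hW, mul_one]
      _ = A * W := by rw [← mul_assoc, h]
  · intro h
    rw [h.eq, mul_assoc, Unitary.mul_star_self_of_mem hW, mul_one]

section Twirl

variable {G : Type*} [Group G] [Fintype G] (U : G →* unitaryGroup n ℂ)

theorem twirl_posSemidef {ρ : Matrix n n ℂ} (hρ : ρ.PosSemidef) : (twirl U ρ).PosSemidef :=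
  (posSemidef_sum _ fun g _ => hρ.mul_mul_conjTranspose_same _).smul (by positivity)

theorem trace_twirl_mul {L : Matrix n n ℂ} (hL : ∀ g, Commute (U g : Matrix n n ℂ) L)
    (ρ : Matrix n n ℂ) : (twirl U ρ * L).trace = (ρ * L).trace := by
  have hterm (g : G) : ((U g : Matrix n n ℂ) * ρ * star (U g : Matrix n n ℂ) * L).trace
      = (ρ * L).trace := by
    rw [mul_assoc, mul_assoc, trace_mul_comm, mul_assoc, mul_assoc, ← (hL g).eq,
      ← mul_assoc (star _), Unitary.coe_star_mul_self, one_mul]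
  simp only [twirl, smul_mul, trace_smul, Finset.sum_mul, trace_sum, hterm, Finset.sum_const,
    Finset.card_univ, nsmul_eq_mul, smul_eq_mul]
  rw [← mul_assoc, inv_mul_cancel₀ (by simp), one_mul]

theorem trace_twirl (ρ : Matrix n n ℂ) : (twirl U ρ).trace = ρ.trace := by
  simpa using trace_twirl_mul U (fun g => Commute.one_right _) ρ

theorem twirl_isDensityMatrix {ρ : Matrix n n ℂ} (hρ : IsDensityMatrix ρ) :
    IsDensityMatrix (twirl U ρ) :=
  ⟨twirl_posSemidef U hρ.1, (trace_twirl U ρ).trans hρ.2⟩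

theorem mul_twirl_mul_star (ρ : Matrix n n ℂ) (h : G) :
    (U h : Matrix n n ℂ) * twirl U ρ * star (U h : Matrix n n ℂ) = twirl U ρ := by
  rw [twirl, Matrix.mul_smul, Matrix.smul_mul, Finset.mul_sum, Finset.sum_mul]
  congr 1
  exact Fintype.sum_equiv (Equiv.mulLeft h) _ _ fun g => by simp [mul_assoc]

theorem mulVec_eq_zero_of_twirl_mulVec_eq_zero {ρ : Matrix n n ℂ} (hρ : ρ.PosSemidef)
    {v : n → ℂ} (hv : twirl U ρ *ᵥ v = 0) : ρ *ᵥ v = 0 := by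
  rw [twirl, smul_mulVec, smul_eq_zero, or_iff_right (by simp)] at hv
  simpa using mulVec_eq_zero_of_sum_posSemidef
    (fun g _ => hρ.mul_mul_conjTranspose_same (U g : Matrix n n ℂ)) hv (Finset.mem_univ 1)

theorem twirl_mulVec_eq_zero {ρ ω : Matrix n n ℂ} (hω : ∀ g, Commute (U g : Matrix n n ℂ) ω)
    (hsupp : ∀ v, ω *ᵥ v = 0 → ρ *ᵥ v = 0) {v : n → ℂ} (hv : ω *ᵥ v = 0) :
    twirl U ρ *ᵥ v = 0 := by
  have hterm (g : G) : ((U g : Matrix n n ℂ) * ρ * star (U g : Matrix n n ℂ)) *ᵥ v = 0 := by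
    have hstar : star (U g : Matrix n n ℂ) = (U g⁻¹ : Matrix n n ℂ) := by simp
    rw [hstar, ← mulVec_mulVec, ← mulVec_mulVec, hsupp _ ?_, mulVec_zero]
    rw [mulVec_mulVec, ← (hω g⁻¹).eq, ← mulVec_mulVec, hv, mulVec_zero]
  simp [twirl, smul_mulVec, sum_mulVec, hterm]

end Twirl

theorem relEntropy_self (ρ : Matrix n n ℂ) : relEntropy ρ ρ = 0 := by
  simp [relEntropy]

theorem relEntropy_nonneg {σ ω : Matrix n n ℂ} (hσ : IsDensityMatrix σ) (hω : IsDensityMatrix ω) :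
    0 ≤ relEntropy σ ω := by
  unfold relEntropy
  split_ifs with hsupp
  · rw [EReal.coe_nonneg, mul_sub, trace_sub, Complex.sub_re, sub_nonneg]
    exact re_trace_mul_matLogb_le hσ.1 hω.1 (hσ.2.trans hω.2.symm) hsupp
  · exact le_top

theorem relEntropy_eq_relEntAsym_add {G : Type*} [Group G] [Fintype G]
    (U : G →* unitaryGroup n ℂ) {ρ ω : Matrix n n ℂ} (hρ : ρ.PosSemidef)
    (hω : ∀ g, Commute (U g : Matrix n n ℂ) ω) :
    relEntropy ρ ω = relEntAsym U ρ + relEntropy (twirl U ρ) ω := by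
  have hsupp : (∀ v, ω *ᵥ v = 0 → ρ *ᵥ v = 0) ↔ ∀ v, ω *ᵥ v = 0 → twirl U ρ *ᵥ v = 0 :=
    ⟨fun h _ hv => twirl_mulVec_eq_zero U hω h hv,
      fun h v hv => mulVec_eq_zero_of_twirl_mulVec_eq_zero U hρ (h v hv)⟩
  have hlog : (ρ * matLogb ω).trace = (twirl U ρ * matLogb ω).trace :=
    (trace_twirl_mul U (fun g => (hω g).matLogb) ρ).symm
  unfold relEntropy
  rw [hsupp]
  split_ifs
  · rw [← EReal.coe_add, EReal.coe_eq_coe_iff, relEntAsym,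
      vnEntropy_eq_neg_re_trace (twirl_posSemidef U hρ).1, vnEntropy_eq_neg_re_trace hρ.1]
    simp only [mul_sub, trace_sub, Complex.sub_re, hlog]
    ring
  · exact (EReal.coe_add_top _).symm

theorem relEntAsym_variational {n G : Type*} [Fintype n] [DecidableEq n]
    [Group G] [Fintype G] (U : G →* Matrix.unitaryGroup n ℂ)
    (ρ : Matrix n n ℂ) (hρ : IsDensityMatrix ρ) :
    ((relEntAsym U ρ : ℝ) : EReal)
      = ⨅ ω : {ω : Matrix n n ℂ // IsDensityMatrix ω ∧
          ∀ g : G, (U g : Matrix n n ℂ) * ω * star (U g : Matrix n n ℂ) = ω},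
          relEntropy ρ (ω : Matrix n n ℂ) := by
  have hτ := twirl_isDensityMatrix U hρ
  have hdecomp (ω : Matrix n n ℂ)
      (hω : ∀ g, (U g : Matrix n n ℂ) * ω * star (U g : Matrix n n ℂ) = ω) :
      relEntropy ρ ω = relEntAsym U ρ + relEntropy (twirl U ρ) ω :=
    relEntropy_eq_relEntAsym_add U hρ.1 fun g =>
      (Unitary.mul_mul_star_eq_iff_commute (U g).2).mp (hω g)
  refine le_antisymm (le_iInf fun ⟨ω, hω, hinv⟩ => ?_) ?_
  · rw [hdecomp ω hinv]
    exact le_add_of_nonneg_right (relEntropy_nonneg hτ hω)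
  · refine (iInf_le _ ⟨twirl U ρ, hτ, mul_twirl_mul_star U ρ⟩).trans_eq ?_
    rw [hdecomp _ (mul_twirl_mul_star U ρ), relEntropy_self, add_zero]
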